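/- Let ε ∈ {1, −1}, let ν, β be nonnegative integers, let α, k be positive integers, and let x ∈ ℤ. Suppose U : ℕ → ℤ satisfies the U-recurrence and V : ℕ → ℤ satisfies the V-recurrence, and let B_1, ..., B_k ∈ ℤ. Define P(n) = ∑_{j=1}^{k} B_j·[(n+ν)^j·x^{jα} + U(j)]. Then for every prime p, the function n ↦ ε^n·(n+ν)!·P(n)·x^{αn+β}, with values viewed in ℚ_p, has sum ∑_{j=1}^{k} B_j·V(j−1) in ℚ_p; in particular this sum is the same integer for every prime p. -/

import Mathlib

/-! The series telescopes. Put `y = x ^ α`. For every `t` there are `Q j t` (`antidiff`) with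
`Q j t - ε y (t + 1) Q j (t + 1) = t ^ j y ^ j + U j`, so the `n`-th term is `F n - F (n + 1)`
for `F n = ε ^ n (n + ν)! y ^ n x ^ β ∑ B j Q j (n + ν)`. As `p ^ ⌊n / p⌋ ∣ n!`, `F n → 0` in
`ℚ_[p]`, so the sum is `F 0`; and `ν! x ^ β Q j ν = V (j - 1)` because `j ↦ Q j ν` solves the
`V`-recurrence scaled by `ν! x ^ β`. -/

open Finset Filter Topology Nat

section BinomRec

variable {R : Type*} [CommRing R] (ε y : R)

def BinomRec (W g : ℕ → R) : Prop :=
  ∀ m, 1 ≤ m →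
    ∑ ℓ ∈ Icc 1 (m + 1), ((m + 1).choose ℓ : R) * y ^ (m + 1 - ℓ) * W ℓ - ε * W m = g m

def binomRecSol (a : R) (g : ℕ → R) : ℕ → R
  | 0 => 0
  | 1 => a
  | m + 2 => g (m + 1) + ε * binomRecSol a g (m + 1) -
      ∑ ℓ ∈ (Icc 1 (m + 1)).attach,
        ((m + 2).choose ℓ : R) * y ^ (m + 2 - ℓ) * binomRecSol a g ℓ
termination_by j => j
decreasing_by
  · omega
  · have := (mem_Icc.mp ℓ.2).2; omega

/- For `f : R → R` put `T f t = f t - ε * y * (t + 1) * f (t + 1)`. The recurrence defining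
`antidiff` does not shift `t`, and
`T (-ε t ^ m y ^ m) = y ^ (m + 1) (t + 1) ^ (m + 1) - ε t ^ m y ^ m`,
so `T` carries it to the recurrence of `t ^ j * y ^ j + U j` for `U` as in the theorem. -/
def antidiff (t : R) : ℕ → R := binomRecSol ε y (-ε) fun m => -ε * (t ^ m * y ^ m)

variable {ε y}

theorem BinomRec.succ_eq {W g : ℕ → R} (hW : BinomRec ε y W g) {m : ℕ} (hm : 1 ≤ m) :
    W (m + 1) =
      g m + ε * W m - ∑ ℓ ∈ Icc 1 m, ((m + 1).choose ℓ : R) * y ^ (m + 1 - ℓ) * W ℓ := by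
  have h := hW m hm
  rw [sum_Icc_succ_top (by omega), choose_self, Nat.sub_self] at h
  push_cast at h
  linear_combination h

theorem binomRec_iff {W g : ℕ → R} : BinomRec ε y W g ↔ ∀ m, 1 ≤ m →
    W (m + 1) =
      g m + ε * W m - ∑ ℓ ∈ Icc 1 m, ((m + 1).choose ℓ : R) * y ^ (m + 1 - ℓ) * W ℓ := by
  refine ⟨fun hW m hm => hW.succ_eq hm, fun h m hm => ?_⟩
  rw [sum_Icc_succ_top (by omega), choose_self, Nat.sub_self, h m hm]
  push_cast
  ring

theorem BinomRec.eq_of_eq_one {W W' g g' : ℕ → R} (hW : BinomRec ε y W g)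
    (hW' : BinomRec ε y W' g') (hg : ∀ m, 1 ≤ m → g m = g' m) (h1 : W 1 = W' 1) :
    ∀ j, 1 ≤ j → W j = W' j := by
  intro j
  induction j using Nat.strong_induction_on with
  | _ j ih =>
    intro hj
    obtain rfl | ⟨m, hm, rfl⟩ : j = 1 ∨ ∃ m, 1 ≤ m ∧ j = m + 1 := by
      rcases j with _ | _ | m <;> simp_all
    · exact h1
    rw [hW.succ_eq hm, hW'.succ_eq hm, hg m hm, ih m (by omega) hm]
    congr 1
    refine sum_congr rfl fun ℓ hℓ => ?_
    rw [ih ℓ (by simp at hℓ; omega) (by simp at hℓ; omega)]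

theorem BinomRec.linearCombination {W W' g g' : ℕ → R} (hW : BinomRec ε y W g)
    (hW' : BinomRec ε y W' g') (a b : R) :
    BinomRec ε y (fun j => a * W j + b * W' j) (fun m => a * g m + b * g' m) := by
  intro m hm
  dsimp only
  rw [← hW m hm, ← hW' m hm, mul_sub, mul_sub, mul_sum, mul_sum, sub_add_sub_comm,
    ← sum_add_distrib]
  congr 1
  · exact sum_congr rfl fun _ _ => by ring
  · ring

theorem sum_Icc_one_eq_sum_range_sub {M : Type*} [AddCommGroup M] (f : ℕ → M) (n : ℕ) :
    ∑ ℓ ∈ Icc 1 n, f ℓ = ∑ ℓ ∈ range (n + 1), f ℓ - f 0 := by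
  rw [range_eq_Ico, sum_eq_sum_Ico_succ_bot (by omega), Ico_add_one_right_eq_Icc]
  abel

theorem binomRec_pow (t : R) :
    BinomRec ε y (fun j => t ^ j * y ^ j)
      (fun m => y ^ (m + 1) * ((t + 1) ^ (m + 1) - 1) - ε * (t ^ m * y ^ m)) := by
  intro m _
  have hsum : ∑ ℓ ∈ range (m + 1 + 1), ((m + 1).choose ℓ : R) * y ^ (m + 1 - ℓ) * (t ^ ℓ * y ^ ℓ)
      = y ^ (m + 1) * (t + 1) ^ (m + 1) := by
    rw [← mul_pow, mul_add, mul_one, add_pow]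
    exact sum_congr rfl fun _ _ => by ring
  simp only [sum_Icc_one_eq_sum_range_sub, hsum, choose_zero_right, Nat.sub_zero, pow_zero]
  ring

theorem binomRec_binomRecSol {a : R} {g : ℕ → R} : BinomRec ε y (binomRecSol ε y a g) g := by
  refine binomRec_iff.mpr fun m hm => ?_
  obtain ⟨m, rfl⟩ := Nat.exists_eq_add_of_le' hm
  rw [binomRecSol,
    sum_attach _ fun ℓ => ((m + 2).choose ℓ : R) * y ^ (m + 2 - ℓ) * binomRecSol ε y a g ℓ]

theorem binomRec_antidiff (t : R) :
    BinomRec ε y (antidiff ε y t) fun m => -ε * (t ^ m * y ^ m) :=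
  binomRec_binomRecSol

theorem antidiff_one (t : R) : antidiff ε y t 1 = -ε := by
  rw [antidiff, binomRecSol]

theorem antidiff_sub_antidiff_add_one {U : ℕ → R} (hε : ε * ε = 1) (hU1 : U 1 = y - ε)
    (hU : BinomRec ε y U fun m => y ^ (m + 1)) (t : R) {j : ℕ} (hj : 1 ≤ j) :
    antidiff ε y t j - ε * y * (t + 1) * antidiff ε y (t + 1) j = t ^ j * y ^ j + U j := by
  have h := ((binomRec_antidiff t).linearCombination (binomRec_antidiff (t + 1)) 1
    (-(ε * y * (t + 1)))).eq_of_eq_one ((binomRec_pow t).linearCombination hU 1 1)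
    (fun m _ => by linear_combination (y ^ (m + 1) * (t + 1) ^ (m + 1)) * hε)
    (by rw [antidiff_one, antidiff_one, hU1]; linear_combination (y * (t + 1)) * hε) j hj
  linear_combination h

theorem sum_mul_antidiff_sub {U : ℕ → R} (hε : ε * ε = 1) (hU1 : U 1 = y - ε)
    (hU : BinomRec ε y U fun m => y ^ (m + 1)) (B : ℕ → R) (k : ℕ) (t : R) :
    ∑ j ∈ Icc 1 k, B j * antidiff ε y t j -
        ε * y * (t + 1) * ∑ j ∈ Icc 1 k, B j * antidiff ε y (t + 1) j =
      ∑ j ∈ Icc 1 k, B j * (t ^ j * y ^ j + U j) := by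
  rw [mul_sum, ← sum_sub_distrib]
  refine sum_congr rfl fun j hj => ?_
  rw [← antidiff_sub_antidiff_add_one hε hU1 hU t (mem_Icc.mp hj).1]
  ring

theorem BinomRec.eq_mul_antidiff {W : ℕ → R} {c t : R}
    (hW : BinomRec ε y W fun m => -ε * c * (t ^ m * y ^ m)) (hW1 : W 1 = -ε * c) {j : ℕ}
    (hj : 1 ≤ j) : W j = c * antidiff ε y t j := by
  have h := hW.eq_of_eq_one ((binomRec_antidiff t).linearCombination (binomRec_antidiff t) c 0)
    (fun m _ => by ring) (by rw [antidiff_one, hW1]; ring) j hj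
  linear_combination h

end BinomRec

theorem Nat.pow_div_dvd_factorial (p n : ℕ) [Fact p.Prime] : p ^ (n / p) ∣ n ! := by
  have hval : n / p ≤ padicValNat p (p * (n / p))! := by
    rw [padicValNat_factorial_mul]; omega
  exact (pow_dvd_pow p hval).trans <| pow_padicValNat_dvd.trans <|
    factorial_dvd_factorial (Nat.mul_div_le n p)

theorem Padic.tendsto_factorial (p : ℕ) [hp : Fact p.Prime] :
    Tendsto (fun n : ℕ => (n ! : ℚ_[p])) atTop (𝓝 0) := by
  have hpow : Tendsto (fun n : ℕ => (p : ℚ_[p]) ^ (n / p)) atTop (𝓝 0) :=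
    (tendsto_pow_atTop_nhds_zero_of_norm_lt_one Padic.norm_p_lt_one).comp
      (Nat.tendsto_div_const_atTop hp.out.ne_zero)
  refine squeeze_zero_norm (fun n => ?_) (tendsto_zero_iff_norm_tendsto_zero.mp hpow)
  obtain ⟨c, hc⟩ := Nat.pow_div_dvd_factorial p n
  rw [hc, Nat.cast_mul, norm_mul, Nat.cast_pow]
  exact mul_le_of_le_one_right (norm_nonneg ((p : ℚ_[p]) ^ (n / p)))
    (by simpa using Padic.norm_int_le_one (p := p) c)

theorem hasSum_sub_succ_of_tendsto_zero {G : Type*} [AddCommGroup G] [UniformSpace G]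
    [IsUniformAddGroup G] [NonarchimedeanAddGroup G] [CompleteSpace G] [T2Space G]
    {f : ℕ → G} (hf : Tendsto f atTop (𝓝 0)) :
    HasSum (fun n => f n - f (n + 1)) (f 0) := by
  have hdiff : Tendsto (fun n => f n - f (n + 1)) cofinite (𝓝 0) := by
    rw [Nat.cofinite_eq_atTop]
    simpa using hf.sub (hf.comp (tendsto_add_atTop_nat 1))
  rw [(NonarchimedeanAddGroup.summable_of_tendsto_cofinite_zero hdiff).hasSum_iff_tendsto_nat]
  simp only [Finset.sum_range_sub']
  simpa using tendsto_const_nhds.sub hf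

theorem Padic.tendsto_zero_of_factorial_dvd {p : ℕ} [Fact p.Prime] {a : ℕ → ℤ}
    (h : ∀ n, (n ! : ℤ) ∣ a n) : Tendsto (fun n => (a n : ℚ_[p])) atTop (𝓝 0) := by
  refine squeeze_zero_norm (fun n => ?_)
    (tendsto_zero_iff_norm_tendsto_zero.mp (Padic.tendsto_factorial p))
  obtain ⟨c, hc⟩ := h n
  rw [hc, Int.cast_mul, norm_mul, Int.cast_natCast]
  exact mul_le_of_le_one_right (norm_nonneg _) (Padic.norm_int_le_one c)

theorem stmt_12_general (ε : ℤ) (hε : ε = 1 ∨ ε = -1) (ν β : ℕ) (α k : ℕ)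
    (x : ℤ) (U : ℕ → ℤ) (V : ℕ → ℤ) (B : ℕ → ℤ)
    (hU1 : U 1 = x ^ α - ε)
    (hU : ∀ m : ℕ, 1 ≤ m →
      (∑ ℓ ∈ Finset.Icc 1 (m + 1),
          ((m + 1).choose ℓ : ℤ) * x ^ ((m + 1 - ℓ) * α) * U ℓ) -
        ε * U m - x ^ ((m + 1) * α) = 0)
    (hV0 : V 0 = -ε * (ν.factorial : ℤ) * x ^ β)
    (hV : ∀ m : ℕ, 1 ≤ m →
      (∑ ℓ ∈ Finset.Icc 1 (m + 1),
          ((m + 1).choose ℓ : ℤ) * x ^ ((m + 1 - ℓ) * α) * V (ℓ - 1)) -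
        ε * V (m - 1) + ε * (ν.factorial : ℤ) * (ν : ℤ) ^ m * x ^ (m * α + β) = 0)
    (P : ℕ → ℤ)
    (hP : ∀ n : ℕ, P n =
      ∑ j ∈ Finset.Icc 1 k, B j * (((n : ℤ) + ν) ^ j * x ^ (j * α) + U j))
    (p : ℕ) [Fact (Nat.Prime p)] :
    HasSum
      (fun n : ℕ =>
        ((ε ^ n * ((n + ν).factorial : ℤ) * P n * x ^ (α * n + β) : ℤ) : ℚ_[p]))
      ((∑ j ∈ Finset.Icc 1 k, B j * V (j - 1) : ℤ) : ℚ_[p]) := by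
  have hε2 : ε * ε = 1 := by rcases hε with rfl | rfl <;> norm_num
  have hUrec : BinomRec ε (x ^ α) U fun m => (x ^ α) ^ (m + 1) := fun m hm => by
    simpa only [← pow_mul', sub_eq_zero] using hU m hm
  have hVrec : BinomRec ε (x ^ α) (fun j => V (j - 1))
      fun m => -ε * (ν ! * x ^ β) * ((ν : ℤ) ^ m * (x ^ α) ^ m) := fun m hm => by
    simp only [← pow_mul', pow_add] at hV ⊢
    linear_combination hV m hm
  set G : ℕ → ℤ := fun n => ∑ j ∈ Icc 1 k, B j * antidiff ε (x ^ α) ((n : ℤ) + ν) j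
  set F : ℕ → ℤ := fun n => (n + ν)! * (ε ^ n * (x ^ α) ^ n * x ^ β * G n)
  have hPG (n : ℕ) : P n = G n - ε * x ^ α * ((n : ℤ) + ν + 1) * G (n + 1) := by
    simp only [hP, pow_mul', ← sum_mul_antidiff_sub hε2 hU1 hUrec, G]
    push_cast [add_right_comm _ (1 : ℤ)]
    rfl
  have hterm (n : ℕ) : ε ^ n * ((n + ν)! : ℤ) * P n * x ^ (α * n + β) = F n - F (n + 1) := by
    simp only [F, hPG, add_right_comm n 1 ν, factorial_succ, pow_add, pow_mul]
    push_cast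
    ring
  have hF0 : F 0 = ∑ j ∈ Icc 1 k, B j * V (j - 1) := by
    simp only [F, G, mul_sum, zero_add, pow_zero, one_mul, CharP.cast_eq_zero]
    refine sum_congr rfl fun j hj => ?_
    rw [hVrec.eq_mul_antidiff (by rw [hV0]; ring) (mem_Icc.mp hj).1]
    ring
  have hlim : Tendsto (fun n => (F n : ℚ_[p])) atTop (𝓝 0) :=
    Padic.tendsto_zero_of_factorial_dvd fun n =>
      (Int.natCast_dvd_natCast.mpr (factorial_dvd_factorial (le_add_right n ν))).mul_right _
  simpa [hterm, hF0] using hasSum_sub_succ_of_tendsto_zero hlim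

theorem stmt_12 (ε : ℤ) (hε : ε = 1 ∨ ε = -1) (ν β : ℕ) (α k : ℕ)
    (hα : 0 < α) (hk : 0 < k) (x : ℤ) (U : ℕ → ℤ) (V : ℕ → ℤ) (B : ℕ → ℤ)
    (hU1 : U 1 = x ^ α - ε)
    (hU : ∀ m : ℕ, 1 ≤ m →
      (∑ ℓ ∈ Finset.Icc 1 (m + 1),
          ((m + 1).choose ℓ : ℤ) * x ^ ((m + 1 - ℓ) * α) * U ℓ) -
        ε * U m - x ^ ((m + 1) * α) = 0)
    (hV0 : V 0 = -ε * (ν.factorial : ℤ) * x ^ β)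
    (hV : ∀ m : ℕ, 1 ≤ m →
      (∑ ℓ ∈ Finset.Icc 1 (m + 1),
          ((m + 1).choose ℓ : ℤ) * x ^ ((m + 1 - ℓ) * α) * V (ℓ - 1)) -
        ε * V (m - 1) + ε * (ν.factorial : ℤ) * (ν : ℤ) ^ m * x ^ (m * α + β) = 0)
    (P : ℕ → ℤ)
    (hP : ∀ n : ℕ, P n =
      ∑ j ∈ Finset.Icc 1 k, B j * (((n : ℤ) + ν) ^ j * x ^ (j * α) + U j))
    (p : ℕ) [Fact (Nat.Prime p)] :
    HasSum
      (fun n : ℕ =>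
        ((ε ^ n * ((n + ν).factorial : ℤ) * P n * x ^ (α * n + β) : ℤ) : ℚ_[p]))
      ((∑ j ∈ Finset.Icc 1 k, B j * V (j - 1) : ℤ) : ℚ_[p]) :=
  stmt_12_general ε hε ν β α k x U V B hU1 hU hV0 hV P hP p
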